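/- For the non-symmetric binary channel with rows ((1+d)/2, (1-d)/2) and (1/2, 1/2), the channel capacity C = max_{p₀} I(X;Y) satisfies C = d²/(8 log 2) + O(d⁴) as d → 0; in particular, for all sufficiently small d > 0, C ≥ d²/(16 log 2). -/

import Mathlib

/-- Binary entropy function (base-2 logarithms). -/
noncomputable def binEnt (p : ℝ) : ℝ :=
  -(p * Real.logb 2 p) - (1 - p) * Real.logb 2 (1 - p)

/-- Mutual information of the non-symmetric binary channel with rows
`((1+d)/2, (1-d)/2)` and `(1/2, 1/2)`, with input probability `p₀` on `x = 0`. -/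
noncomputable def nonsymInfo (d p₀ : ℝ) : ℝ :=
  binEnt ((1 + p₀ * d) / 2) - p₀ * (binEnt ((1 - d) / 2) - 1) - 1

/-!
In natural units `binEnt ((1 + x) / 2) = 1 - φ(x) / (2 log 2)` with
`φ(x) = (1 + x) log (1 + x) + (1 - x) log (1 - x) = x² + x⁴/6 + O(x⁶)`, so that
`2 log 2 · I(X;Y) = p₀ φ(d) - φ(p₀ d) = p₀ (1 - p₀) d² + O(d⁴)`.
The maximum of `p₀ (1 - p₀)` is `1/4`, attained at `p₀ = 1/2`, which gives `C = d²/(8 log 2) + O(d⁴)`.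
The error terms are controlled by the degree-four Taylor bound for `log (1 ± x)`.
-/

open Real Set

/-- Twice the Kullback–Leibler divergence, in nats, of `((1 + x) / 2, (1 - x) / 2)` from the
uniform distribution. -/
noncomputable def binEntDeficit (x : ℝ) : ℝ := (1 + x) * log (1 + x) + (1 - x) * log (1 - x)

lemma binEntDeficit_neg (x : ℝ) : binEntDeficit (-x) = binEntDeficit x := by
  simp only [binEntDeficit, sub_neg_eq_add, ← sub_eq_add_neg]
  ring

lemma mul_log_div (y : ℝ) {c : ℝ} (hc : c ≠ 0) : y * log (y / c) = y * log y - y * log c := by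
  rcases eq_or_ne y 0 with rfl | hy
  · simp
  · rw [log_div hy hc]
    ring

lemma binEnt_one_add_div_two (x : ℝ) :
    binEnt ((1 + x) / 2) = 1 - binEntDeficit x / (2 * log 2) := by
  have hlog2 : log 2 ≠ 0 := (log_pos one_lt_two).ne'
  have hmul (y : ℝ) : y / 2 * logb 2 (y / 2) = (y * log y - y * log 2) / (2 * log 2) := by
    rw [logb, ← mul_log_div y two_ne_zero]
    field_simp
  rw [binEnt, show 1 - (1 + x) / 2 = (1 - x) / 2 by ring, hmul, hmul, binEntDeficit]
  field_simp
  ring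

lemma nonsymInfo_eq (d p : ℝ) :
    nonsymInfo d p = (p * binEntDeficit d - binEntDeficit (p * d)) / (2 * log 2) := by
  have hlog2 : log 2 ≠ 0 := (log_pos one_lt_two).ne'
  rw [nonsymInfo, show (1 - d) / 2 = (1 + -d) / 2 by ring, binEnt_one_add_div_two,
    binEnt_one_add_div_two, binEntDeficit_neg]
  field_simp
  ring

lemma abs_binEntDeficit_sub_le {x : ℝ} (hx : |x| < 1) :
    |binEntDeficit x - (x ^ 2 + x ^ 4 / 6)| ≤ 2 * |x| ^ 5 / (1 - |x|) := by
  set R := |x| ^ 5 / (1 - |x|)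
  have hplus : |log (1 + x) - (x - x ^ 2 / 2 + x ^ 3 / 3 - x ^ 4 / 4)| ≤ R := by
    have h := abs_log_sub_add_sum_range_le (x := -x) (by rwa [abs_neg]) 4
    simp only [Finset.sum_range_succ, Finset.sum_range_zero, abs_neg, sub_neg_eq_add] at h
    convert h using 2
    push_cast
    ring
  have hminus : |log (1 - x) - (-x - x ^ 2 / 2 - x ^ 3 / 3 - x ^ 4 / 4)| ≤ R := by
    have h := abs_log_sub_add_sum_range_le hx 4
    simp only [Finset.sum_range_succ, Finset.sum_range_zero] at h
    convert h using 2
    push_cast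
    ring
  obtain ⟨hx₁, hx₂⟩ := abs_lt.mp hx
  calc |binEntDeficit x - (x ^ 2 + x ^ 4 / 6)|
      = |(1 + x) * (log (1 + x) - (x - x ^ 2 / 2 + x ^ 3 / 3 - x ^ 4 / 4))
          + (1 - x) * (log (1 - x) - (-x - x ^ 2 / 2 - x ^ 3 / 3 - x ^ 4 / 4))| := by
        rw [binEntDeficit]
        ring_nf
    _ ≤ (1 + x) * R + (1 - x) * R := by
        refine (abs_add_le _ _).trans (add_le_add ?_ ?_) <;> rw [abs_mul, abs_of_pos (by linarith)]
        · exact mul_le_mul_of_nonneg_left hplus (by linarith)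
        · exact mul_le_mul_of_nonneg_left hminus (by linarith)
    _ = 2 * R := by ring
    _ = 2 * |x| ^ 5 / (1 - |x|) := mul_div_assoc .. |>.symm

/-- `1 / 13` is where the remainder `2 |x|⁵ / (1 - |x|)` drops below `x⁴ / 6`. -/
lemma abs_binEntDeficit_sub_le_of_abs_le {x : ℝ} (hx : |x| ≤ 1 / 13) :
    |binEntDeficit x - (x ^ 2 + x ^ 4 / 6)| ≤ x ^ 4 / 6 := by
  have hx0 := abs_nonneg x
  have hpos : 0 < 1 - |x| := by linarith
  calc |binEntDeficit x - (x ^ 2 + x ^ 4 / 6)| ≤ 2 * |x| ^ 5 / (1 - |x|) :=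
        abs_binEntDeficit_sub_le (by linarith)
    _ ≤ |x| ^ 4 / 6 := by
        rw [div_le_iff₀ hpos, pow_succ]
        nlinarith [pow_nonneg hx0 4]
    _ = x ^ 4 / 6 := by rw [Even.pow_abs (by decide)]

lemma nonsymInfo_le {d p : ℝ} (hd : |d| ≤ 1 / 13) (hp : p ∈ Icc 0 1) :
    nonsymInfo d p ≤ d ^ 2 / (8 * log 2) + d ^ 4 / (6 * log 2) := by
  obtain ⟨hp₀, hp₁⟩ := hp
  have hpd : |p * d| ≤ 1 / 13 := by
    rw [abs_mul, abs_of_nonneg hp₀]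
    exact (mul_le_of_le_one_left (abs_nonneg d) hp₁).trans hd
  have hφd := (abs_le.mp (abs_binEntDeficit_sub_le_of_abs_le hd)).2
  have hφpd := (abs_le.mp (abs_binEntDeficit_sub_le_of_abs_le hpd)).1
  have hlog2 : 0 < log 2 := log_pos one_lt_two
  have hscale : (d ^ 2 / (8 * log 2) + d ^ 4 / (6 * log 2)) * (2 * log 2)
      = d ^ 2 / 4 + d ^ 4 / 3 := by
    field_simp
    ring
  rw [nonsymInfo_eq, div_le_iff₀ (by positivity), hscale]
  -- `p (1 - p) ≤ 1/4`
  nlinarith [mul_le_mul_of_nonneg_left hφd hp₀, mul_nonneg (sq_nonneg (p - 1 / 2)) (sq_nonneg d),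
    mul_nonneg (sub_nonneg.mpr hp₁) (pow_nonneg (sq_nonneg d) 2)]

lemma le_nonsymInfo_half {d : ℝ} (hd : |d| ≤ 1 / 13) :
    d ^ 2 / (8 * log 2) - d ^ 4 / (96 * log 2) ≤ nonsymInfo d (1 / 2) := by
  have hhalf : |1 / 2 * d| ≤ 1 / 13 := by
    rw [abs_mul, abs_of_pos one_half_pos]
    linarith [abs_nonneg d]
  have hφd := (abs_le.mp (abs_binEntDeficit_sub_le_of_abs_le hd)).1
  have hφhalf := (abs_le.mp (abs_binEntDeficit_sub_le_of_abs_le hhalf)).2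
  have hlog2 : 0 < log 2 := log_pos one_lt_two
  have hscale : (d ^ 2 / (8 * log 2) - d ^ 4 / (96 * log 2)) * (2 * log 2)
      = d ^ 2 / 4 - d ^ 4 / 48 := by
    field_simp
    ring
  rw [nonsymInfo_eq, le_div_iff₀ (by positivity), hscale]
  linarith

noncomputable def nonsymCapacity (d : ℝ) : ℝ := ⨆ p₀ ∈ Icc (0 : ℝ) 1, nonsymInfo d p₀

lemma abs_nonsymCapacity_sub_le {d : ℝ} (hd : |d| ≤ 1 / 13) :
    |nonsymCapacity d - d ^ 2 / (8 * log 2)| ≤ d ^ 4 / (6 * log 2) := by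
  have hlog2 : 0 < log 2 := log_pos one_lt_two
  set B := d ^ 2 / (8 * log 2) + d ^ 4 / (6 * log 2)
  have hB : 0 ≤ B := by positivity
  have hbdd : BddAbove (⋃ p, range fun (_ : p ∈ Icc (0 : ℝ) 1) ↦ nonsymInfo d p) := by
    refine ⟨B, ?_⟩
    simp only [mem_upperBounds, mem_iUnion, mem_range]
    rintro _ ⟨p, hp, rfl⟩
    exact nonsymInfo_le hd hp
  have hlower : nonsymInfo d (1 / 2) ≤ nonsymCapacity d :=
    le_ciSup₂ hbdd (1 / 2) ⟨by norm_num, by norm_num⟩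
  -- in `ℝ` an empty supremum is `0`, whence `0 ≤ B` is needed
  have hupper : nonsymCapacity d ≤ B :=
    Real.iSup_le (fun p ↦ Real.iSup_le (fun hp ↦ nonsymInfo_le hd hp) hB) hB
  rw [abs_le]
  constructor
  · have h96 : d ^ 4 / (96 * log 2) ≤ d ^ 4 / (6 * log 2) := by gcongr; norm_num
    linarith [le_nonsymInfo_half hd]
  · linarith

/-- The capacity `C = sup_{p₀ ∈ [0,1]} I(X;Y)` of the non-symmetric binary
channel satisfies `C = d²/(8 log 2) + O(d⁴)` as `d → 0`; in particular for all
sufficiently small `d > 0`, `C ≥ d²/(16 log 2)`. -/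
theorem nonsym_channel_capacity :
    (∃ K > (0 : ℝ), ∃ δ > (0 : ℝ), ∀ d : ℝ, 0 < d → d ≤ δ →
      |(⨆ p₀ ∈ Set.Icc (0:ℝ) 1, nonsymInfo d p₀) - d ^ 2 / (8 * Real.log 2)| ≤
        K * d ^ 4) ∧
    (∃ δ > (0 : ℝ), ∀ d : ℝ, 0 < d → d ≤ δ →
      (⨆ p₀ ∈ Set.Icc (0:ℝ) 1, nonsymInfo d p₀) ≥ d ^ 2 / (16 * Real.log 2)) := by
  have hlog2 : 0 < log 2 := log_pos one_lt_two
  have hC {d : ℝ} (hd₀ : 0 < d) (hd : d ≤ 1 / 13) :=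
    abs_nonsymCapacity_sub_le (by rwa [abs_of_pos hd₀])
  refine ⟨⟨1 / (6 * log 2), by positivity, 1 / 13, by norm_num, fun d hd₀ hd ↦ ?_⟩,
    ⟨1 / 13, by norm_num, fun d hd₀ hd ↦ ?_⟩⟩
  · change |nonsymCapacity d - _| ≤ _
    rw [one_div_mul_eq_div]
    exact hC hd₀ hd
  · change d ^ 2 / (16 * log 2) ≤ nonsymCapacity d
    have hd4 : d ^ 4 / (6 * log 2) ≤ d ^ 2 / (16 * log 2) := by
      rw [div_le_div_iff₀ (by positivity) (by positivity)]
      have hd2 : d ^ 2 ≤ 1 / 169 := by nlinarith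
      nlinarith [mul_pos (pow_pos hd₀ 2) hlog2]
    linarith [(abs_le.mp (hC hd₀ hd)).1, show d ^ 2 / (8 * log 2) = 2 * (d ^ 2 / (16 * log 2)) by ring]
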